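/- arXiv:math/0301038 — 4 statements merged into one kernel-verified Lean document; each statement's English description precedes it below -/
import Mathlib

section
/- A trigonometric polynomial T(t) = Re Σ_{k=0}^n y_k e^{ikt} with complex coefficients y_k (y_0 real) is nonnegative for all real t if and only if there exists an algebraic polynomial X(z) = x_0 + x_1 z + ... + x_n z^n with complex coefficients such that T(t) = |X(e^{it})|^2 for all real t. -/
/-!
Write `z = e^{it}`. A trigonometric polynomial of degree `n` is `z⁻ⁿ P(z)` for a polynomial `P` of
degree at most `2n`, and its being real on the circle forces `P` to be self-inversive:
`P = z²ⁿ P̄(1/z)`. Hence the roots of `P` off the circle come in pairs `r, 1/r̄`, and a root `r` on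
the circle is double, since a nonnegative function has a critical point at each of its zeros.
Either way `P` is divisible by `(z - r)(1 - r̄z)`, which on the circle equals `z |z - r|²`;
dividing it out leaves a nonnegative trigonometric polynomial of degree `n - 1`, and induction
on `n` gives `z⁻ⁿ P(z) = |Q(z)|²` with `Q` the product of the factors `z - r`.
-/

open Complex Polynomial
open scoped ComplexOrder ComplexConjugate

lemma HasDerivAt.eq_zero_of_nonneg {F : ℝ → ℂ} {F' : ℂ} {t₀ : ℝ} (hF : HasDerivAt F F' t₀)
    (hnonneg : ∀ t, 0 ≤ F t) (hzero : F t₀ = 0) : F' = 0 := by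
  have hre : F'.re = 0 := by
    refine IsLocalMin.hasDerivAt_eq_zero (f := fun t => (F t).re) (a := t₀) ?_ ?_
    · refine Filter.Eventually.of_forall fun t => ?_
      simpa [hzero] using (nonneg_iff.mp (hnonneg t)).1
    · exact reCLM.hasFDerivAt.comp_hasDerivAt t₀ hF
  have him : F'.im = 0 := by
    have hderiv : HasDerivAt (fun t => (F t).im) F'.im t₀ :=
      imCLM.hasFDerivAt.comp_hasDerivAt t₀ hF
    have hconst : (fun t => (F t).im) = fun _ => 0 :=
      funext fun t => (nonneg_iff.mp (hnonneg t)).2.symm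
    rw [hconst] at hderiv
    exact hderiv.unique (hasDerivAt_const _ _)
  exact Complex.ext hre him

lemma Polynomial.eval_reflect {K : Type*} [Field K] {N : ℕ} {f : K[X]} (hf : f.natDegree ≤ N)
    {z : K} (hz : z ≠ 0) : (f.reflect N).eval z = z ^ N * f.eval z⁻¹ := by
  let := invertibleOfNonzero (inv_ne_zero hz)
  have := eval₂_reflect_mul_pow (RingHom.id K) z⁻¹ N f hf
  simp only [eval₂_id, invOf_eq_inv, inv_inv] at this
  rw [← this, mul_comm, mul_assoc, ← mul_pow, inv_mul_cancel₀ hz, one_pow, mul_one]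

namespace FejerRiesz

instance : Nontrivial Circle := ⟨⟨-1, 1, Circle.neg_ne_self 1⟩⟩

instance : Infinite Circle := PreconnectedSpace.infinite

noncomputable def circleEval (n : ℕ) (P : ℂ[X]) (z : Circle) : ℂ :=
  ((z : ℂ) ^ n)⁻¹ * P.eval (z : ℂ)

lemma continuous_circleEval (n : ℕ) (P : ℂ[X]) : Continuous (circleEval n P) := by
  unfold circleEval
  fun_prop (disch := exact fun z => pow_ne_zero _ (Circle.coe_ne_zero z))

lemma reflect_map_conj_eq_self {n : ℕ} {P : ℂ[X]} (hdeg : P.natDegree ≤ 2 * n)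
    (hreal : ∀ z, (circleEval n P z).im = 0) : (P.map (starRingEnd ℂ)).reflect (2 * n) = P := by
  refine eq_of_infinite_eval_eq _ _
    ((Set.infinite_range_of_injective (α := Circle) Circle.coe_injective).mono ?_)
  rintro _ ⟨z, rfl⟩
  have hconj : conj (z : ℂ) = (z : ℂ)⁻¹ := (inv_eq_conj (Circle.norm_coe z)).symm
  have h := conj_eq_iff_im.mpr (hreal z)
  simp only [circleEval, map_mul, map_inv₀, map_pow, hconj, inv_pow, inv_inv] at h
  show eval _ _ = eval _ _
  rw [eval_reflect (by rwa [natDegree_map]) (Circle.coe_ne_zero z), ← hconj, eval_map_apply]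
  have hz : (z : ℂ) ^ n ≠ 0 := pow_ne_zero _ (Circle.coe_ne_zero z)
  field_simp at h
  linear_combination h

lemma coeff_eq_conj_coeff_zero {N : ℕ} {P : ℂ[X]} (h : (P.map (starRingEnd ℂ)).reflect N = P) :
    P.coeff N = conj (P.coeff 0) := by
  conv_lhs => rw [← h]
  rw [coeff_reflect, revAt_le le_rfl, Nat.sub_self, coeff_map]

lemma isRoot_inv_conj {N : ℕ} {P : ℂ[X]} (hdeg : P.natDegree ≤ N)
    (h : (P.map (starRingEnd ℂ)).reflect N = P) {r : ℂ} (hr : r ≠ 0) (hroot : P.IsRoot r) :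
    P.IsRoot (conj r)⁻¹ := by
  rw [IsRoot, ← h, eval_reflect (by rwa [natDegree_map]) (by simpa using hr), inv_inv,
    eval_map_apply, hroot.eq_zero, map_zero, mul_zero]

lemma isRoot_derivative_of_nonneg {n : ℕ} {P : ℂ[X]} (hP : ∀ z, 0 ≤ circleEval n P z)
    {z : Circle} (hz : P.IsRoot z) : P.derivative.IsRoot z := by
  obtain ⟨t₀, rfl⟩ := Circle.exp_surjective z
  have hw0 : (Circle.exp t₀ : ℂ) ≠ 0 := Circle.coe_ne_zero _
  have hexp : HasDerivAt (fun t : ℝ => (Circle.exp t : ℂ)) (Circle.exp t₀ * I) t₀ := by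
    simpa using (((hasDerivAt_id (t₀ : ℂ)).mul_const I).cexp).comp_ofReal
  have hpoly : HasDerivAt (fun t => P.eval (Circle.exp t : ℂ))
      (P.derivative.eval (Circle.exp t₀ : ℂ) * (Circle.exp t₀ * I)) t₀ :=
    (P.hasDerivAt _).comp t₀ hexp
  have hF := ((hexp.pow n).fun_inv (pow_ne_zero n hw0)).mul hpoly
  simp only [hz.eq_zero, mul_zero, zero_add] at hF
  have := hF.eq_zero_of_nonneg (fun t => hP (Circle.exp t))
    (show _ * P.eval _ = 0 by rw [hz.eq_zero, mul_zero])
  simpa [hw0, I_ne_zero] using this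

/-- Unlike `(X - r)(X - 1/r̄)`, this also makes sense at `r = 0`, where it is `X`. -/
noncomputable def circleFactor (r : ℂ) : ℂ[X] := (X - C r) * (1 - C (conj r) * X)

lemma circleFactor_eval (r : ℂ) (z : Circle) :
    (circleFactor r).eval (z : ℂ) = z * (‖(z : ℂ) - r‖ ^ 2 : ℝ) := by
  have hz : (z : ℂ) ≠ 0 := Circle.coe_ne_zero z
  rw [ofReal_pow, ← mul_conj', map_sub, ← inv_eq_conj (Circle.norm_coe z), circleFactor]
  simp only [eval_mul, eval_sub, eval_X, eval_C, eval_one]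
  field_simp

lemma circleEval_circleFactor_mul (n : ℕ) (r : ℂ) (B : ℂ[X]) (z : Circle) :
    circleEval (n + 1) (circleFactor r * B) z = (‖(z : ℂ) - r‖ ^ 2 : ℝ) * circleEval n B z := by
  have hz : (z : ℂ) ≠ 0 := Circle.coe_ne_zero z
  simp only [circleEval, eval_mul, circleFactor_eval]
  field_simp
  ring

lemma circleFactor_eq_C_mul {r : ℂ} (hr : r ≠ 0) :
    circleFactor r = C (-conj r) * ((X - C r) * (X - C (conj r)⁻¹)) := by
  have hinv : C (conj r) * C (conj r)⁻¹ = 1 := by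
    rw [← C_mul, mul_inv_cancel₀ (by simpa using hr), C_1]
  rw [circleFactor, C_neg]
  linear_combination -(X - C r) * hinv

lemma natDegree_circleFactor {r : ℂ} (hr : r ≠ 0) : (circleFactor r).natDegree = 2 := by
  rw [circleFactor_eq_C_mul hr, natDegree_C_mul (by simpa using hr),
    natDegree_mul (X_sub_C_ne_zero _) (X_sub_C_ne_zero _), natDegree_X_sub_C, natDegree_X_sub_C]

lemma circleFactor_dvd {n : ℕ} {P : ℂ[X]} (hdeg : P.natDegree ≤ 2 * n)
    (hP : ∀ z, 0 ≤ circleEval n P z) {r : ℂ} (hr : r ≠ 0) (hroot : P.IsRoot r) :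
    circleFactor r ∣ P := by
  rcases eq_or_ne P 0 with rfl | hP0
  · exact dvd_zero _
  rw [circleFactor_eq_C_mul hr, C_mul_dvd (by simpa using hr)]
  by_cases hnorm : ‖r‖ = 1
  · rw [← inv_eq_conj hnorm, inv_inv, ← sq, ← le_rootMultiplicity_iff hP0]
    have hroot' : P.derivative.IsRoot r :=
      isRoot_derivative_of_nonneg hP (z := ⟨r, mem_sphere_zero_iff_norm.2 hnorm⟩) hroot
    exact (one_lt_rootMultiplicity_iff_isRoot hP0).2 ⟨hroot, hroot'⟩
  · have hne : r - (conj r)⁻¹ ≠ 0 := by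
      rw [sub_ne_zero, Ne, ← mul_eq_one_iff_eq_inv₀ (by simpa using hr), mul_conj']
      exact_mod_cast (pow_eq_one_iff_of_nonneg (norm_nonneg r) two_ne_zero).not.2 hnorm
    have hsym := reflect_map_conj_eq_self hdeg fun z => (nonneg_iff.1 (hP z)).2.symm
    exact (isCoprime_X_sub_C_of_isUnit_sub hne.isUnit).mul_dvd (dvd_iff_isRoot.2 hroot)
      (dvd_iff_isRoot.2 (isRoot_inv_conj hdeg hsym hr hroot))

lemma exists_eq_circleFactor_mul {n : ℕ} {P : ℂ[X]} (hdeg : P.natDegree ≤ 2 * (n + 1))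
    (hP : ∀ z, 0 ≤ circleEval (n + 1) P z) :
    ∃ r B, P = circleFactor r * B ∧ B.natDegree ≤ 2 * n := by
  have hsym := reflect_map_conj_eq_self hdeg fun z => (nonneg_iff.1 (hP z)).2.symm
  have htop := coeff_eq_conj_coeff_zero hsym
  by_cases h0 : P.coeff 0 = 0
  · refine ⟨0, P.divX, ?_, ?_⟩
    · simpa [circleFactor, h0] using (X_mul_divX_add P).symm
    · have := natDegree_le_pred hdeg (by rw [htop, h0, map_zero])
      rw [natDegree_divX_eq_natDegree_tsub_one]
      omega
  · have hP0 : P ≠ 0 := fun h => h0 (by simp [h])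
    have hnat : P.natDegree = 2 * (n + 1) :=
      le_antisymm hdeg (le_natDegree_of_ne_zero (by simpa [htop] using h0))
    obtain ⟨r, hroot⟩ := Complex.exists_root ((natDegree_pos_iff_degree_pos (p := P)).1 (by omega))
    have hr : r ≠ 0 := by
      rintro rfl
      exact h0 (by rwa [coeff_zero_eq_eval_zero])
    obtain ⟨B, rfl⟩ := circleFactor_dvd hdeg hP hr hroot
    refine ⟨r, B, rfl, ?_⟩
    rw [natDegree_mul (ne_zero_of_natDegree_gt (n := 0) (by rw [natDegree_circleFactor hr]; omega))
      (right_ne_zero_of_mul hP0), natDegree_circleFactor hr] at hnat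
    omega

lemma nonneg_of_circleFactor_mul {n : ℕ} {r : ℂ} {B : ℂ[X]}
    (h : ∀ z, 0 ≤ circleEval (n + 1) (circleFactor r * B) z) (z : Circle) :
    0 ≤ circleEval n B z := by
  have hoff : ∀ w : Circle, (w : ℂ) ≠ r → 0 ≤ circleEval n B w := by
    intro w hw
    have hpos : (0 : ℝ) < ‖(w : ℂ) - r‖ ^ 2 := by
      have := sub_ne_zero.2 hw
      positivity
    have hw := mul_nonneg (inv_nonneg.2 (zero_le_real.2 hpos.le)) (h w)
    rwa [circleEval_circleFactor_mul, inv_mul_cancel_left₀ (by exact_mod_cast hpos.ne')] at hw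
  by_cases hz : (z : ℂ) = r
  · refine ge_of_tendsto (x := nhdsWithin z {z}ᶜ) ?_ (eventually_nhdsWithin_of_forall fun w hw =>
      hoff w fun h => hw (Circle.coe_injective (h.trans hz.symm)))
    exact (continuous_circleEval n B).tendsto z |>.mono_left nhdsWithin_le_nhds
  · exact hoff z hz

theorem exists_circleEval_eq_sq_norm : ∀ (n : ℕ) (P : ℂ[X]), P.natDegree ≤ 2 * n →
    (∀ z, 0 ≤ circleEval n P z) →
    ∃ Q : ℂ[X], Q.natDegree ≤ n ∧ ∀ z : Circle, circleEval n P z = (‖Q.eval (z : ℂ)‖ ^ 2 : ℝ)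
  | 0, P, hdeg, hP => by
    obtain ⟨c, rfl⟩ : ∃ c, P = C c := ⟨_, eq_C_of_natDegree_le_zero (by simpa using hdeg)⟩
    have hc : 0 ≤ c := by simpa [circleEval] using hP 1
    refine ⟨C (√c.re : ℂ), by simp, fun z => ?_⟩
    rw [eval_C, norm_real, Real.norm_of_nonneg (Real.sqrt_nonneg _),
      Real.sq_sqrt (nonneg_iff.1 hc).1]
    simpa [circleEval] using (re_add_im c).symm.trans (by simp [← (nonneg_iff.1 hc).2])
  | n + 1, P, hdeg, hP => by
    obtain ⟨r, B, rfl, hB⟩ := exists_eq_circleFactor_mul hdeg hP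
    obtain ⟨Q, hQ, hBQ⟩ :=
      exists_circleEval_eq_sq_norm n B hB (nonneg_of_circleFactor_mul hP)
    refine ⟨(X - C r) * Q, ?_, fun z => ?_⟩
    · exact natDegree_mul_le.trans (by rw [natDegree_X_sub_C]; omega)
    · rw [circleEval_circleFactor_mul, hBQ, eval_mul, norm_mul, mul_pow]
      simp

lemma exists_circleEval_eq_re {n : ℕ} {S : ℂ[X]} (hS : S.natDegree ≤ n) :
    ∃ P : ℂ[X], P.natDegree ≤ 2 * n ∧ ∀ z : Circle, circleEval n P z = (S.eval (z : ℂ)).re := by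
  have hSc : (S.map (starRingEnd ℂ)).natDegree ≤ n := by rwa [natDegree_map]
  refine ⟨C 2⁻¹ * (X ^ n * S + (S.map (starRingEnd ℂ)).reflect n), ?_, fun z => ?_⟩
  · refine natDegree_C_mul_le _ _ |>.trans <| natDegree_add_le_of_degree_le ?_ ?_
    · exact natDegree_mul_le.trans (by rw [natDegree_X_pow]; omega)
    · exact natDegree_reflect_le.trans (by omega)
  · have hz : (z : ℂ) ≠ 0 := Circle.coe_ne_zero z
    rw [circleEval, eval_mul, eval_C, eval_add, eval_mul, eval_X_pow, eval_reflect hSc hz,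
      inv_eq_conj (Circle.norm_coe z), eval_map_apply, re_eq_add_conj]
    field_simp

lemma sum_mul_cexp_eq_eval (s : Finset ℕ) (c : ℕ → ℂ) (t : ℝ) :
    ∑ k ∈ s, c k * cexp (I * k * t) = (∑ k ∈ s, C (c k) * X ^ k).eval (Circle.exp t : ℂ) := by
  simp only [eval_finsetSum, eval_mul, eval_C, eval_X_pow, Circle.coe_exp, ← Complex.exp_nat_mul]
  refine Finset.sum_congr rfl fun k _ => ?_
  ring_nf

end FejerRiesz

open FejerRiesz in
theorem fejer_riesz_general (n : ℕ) (y : ℕ → ℂ) :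
    (∀ t : ℝ, 0 ≤ (∑ k ∈ Finset.range (n + 1),
        y k * Complex.exp (Complex.I * k * t)).re) ↔
    ∃ x : ℕ → ℂ, ∀ t : ℝ,
      (∑ k ∈ Finset.range (n + 1), y k * Complex.exp (Complex.I * k * t)).re =
        ‖∑ k ∈ Finset.range (n + 1),
          x k * Complex.exp (Complex.I * k * t)‖ ^ 2 := by
  simp only [sum_mul_cexp_eq_eval]
  constructor
  · intro hT
    obtain ⟨P, hPdeg, hPT⟩ := exists_circleEval_eq_re <| natDegree_sum_le_of_forall_le _ _
      fun k hk => (natDegree_C_mul_X_pow_le (y k) k).trans (Finset.mem_range_succ_iff.1 hk)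
    obtain ⟨Q, hQdeg, hPQ⟩ := exists_circleEval_eq_sq_norm n P hPdeg fun z => by
      obtain ⟨t, rfl⟩ := Circle.exp_surjective z
      exact hPT _ ▸ zero_le_real.2 (hT t)
    refine ⟨Q.coeff, fun t => ?_⟩
    rw [← as_sum_range_C_mul_X_pow' Q (Nat.lt_succ_of_le hQdeg)]
    exact_mod_cast (hPT (Circle.exp t)).symm.trans (hPQ _)
  · rintro ⟨x, hx⟩ t
    rw [hx t]
    positivity

/-- **Fejér's theorem.** A trigonometric polynomial `T(t) = Re ∑_{k=0}^n y_k e^{ikt}`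
(with `y_0` real) is nonnegative on ℝ iff there is an algebraic polynomial
`X(z) = ∑_{k=0}^n x_k z^k` with `T(t) = |X(e^{it})|^2` for all real `t`. -/
theorem fejer_riesz (n : ℕ) (y : ℕ → ℂ) (h0 : (y 0).im = 0) :
    (∀ t : ℝ, 0 ≤ (∑ k ∈ Finset.range (n + 1),
        y k * Complex.exp (Complex.I * k * t)).re) ↔
    ∃ x : ℕ → ℂ, ∀ t : ℝ,
      (∑ k ∈ Finset.range (n + 1), y k * Complex.exp (Complex.I * k * t)).re =
        ‖∑ k ∈ Finset.range (n + 1),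
          x k * Complex.exp (Complex.I * k * t)‖ ^ 2 :=
  fejer_riesz_general n y
end

section
/- Let Y be the polynomial with coefficients given by the autocorrelations of the coefficients of X (i.e., Y = Φ(X), so that X·X* = Y* + z^n Y). Define Dis_2(Y) := Dis(Y*(z) + z^n Y(z)). Then Dis_2(Y) = |Dis(X)|^2 · V(X)^2, where V(X) = Res(X, X*) is the Möbius discriminant. -/
/-! Over `ℂ` every polynomial is `c * ∏ (z - a)`, and in that form `Dis`, `Res` are explicit
products over the root lists. The root list of `P * Q` is the concatenation of those of `P` and
`Q`, which gives `Dis (P * Q) = Dis P * Dis Q * Res (P, Q) ^ 2`. The roots of `X*` are the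
`conj(a)⁻¹`; inverting the roots multiplies `∏ (a_i - a_j) ^ 2` by `(∏ a)^(2 - 2n)`, exactly
compensated by the new leading coefficient `conj (X 0) = conj (c ∏ (-a))`, so
`Dis X* = conj (Dis X)`. Applied to `X * X* = Y* + z^n Y` this gives the claim. -/

open Polynomial

/-- Reciprocal polynomial `P*(z) = z^n conj(P)(1/z)`. -/
noncomputable def recip (n : ℕ) (P : Polynomial ℂ) : Polynomial ℂ :=
  (P.map (starRingEnd ℂ)).reflect n

/-- Resultant via the root (Cayley) formula. -/
noncomputable def res (P Q : Polynomial ℂ) : ℂ :=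
  P.leadingCoeff ^ Q.natDegree * Q.leadingCoeff ^ P.natDegree *
    (P.roots.bind fun a => Q.roots.map fun b => b - a).prod

/-- Discriminant via the root formula. -/
noncomputable def disc (P : Polynomial ℂ) : ℂ :=
  P.leadingCoeff ^ (2 * P.natDegree - 2) *
    ∏ p ∈ Finset.univ.filter
      (fun p : Fin P.roots.toList.length × Fin P.roots.toList.length => p.2 < p.1),
      (P.roots.toList.get p.1 - P.roots.toList.get p.2) ^ 2

namespace List

variable {α β M : Type*} [CommMonoid M]

lemma prod_map_pow (l : List α) (g : α → M) (n : ℕ) :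
    (l.map fun a => g a ^ n).prod = (l.map g).prod ^ n :=
  Multiset.prod_map_pow (m := (l : Multiset α))

noncomputable def offDiagProd (f : α → α → M) (l : List α) : M :=
  ∏ p ∈ Finset.univ.filter (fun p : Fin l.length × Fin l.length => p.2 < p.1),
    f (l.get p.1) (l.get p.2)

variable (f : α → α → M)

@[simp] lemma offDiagProd_nil : offDiagProd f [] = 1 := by simp [offDiagProd]

lemma offDiagProd_cons (a : α) (l : List α) :
    offDiagProd f (a :: l) = (l.map fun b => f b a).prod * offDiagProd f l := by
  simp only [offDiagProd, Finset.prod_filter, Fintype.prod_prod_type]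
  change (∏ x : Fin (l.length + 1), ∏ y : Fin (l.length + 1),
    if y < x then f ((a :: l).get x) ((a :: l).get y) else 1) = _
  rw [Fin.prod_univ_succ]
  simp only [Fin.prod_univ_succ, Fin.succ_lt_succ_iff, get_cons_zero, Fin.succ_pos, if_true,
    Fin.not_lt_zero, if_false, Finset.prod_const_one, one_mul, Finset.prod_mul_distrib]
  rw [← Fin.prod_univ_fun_getElem l (fun b => f b a)]
  rfl

lemma offDiagProd_append (l₁ l₂ : List α) :
    offDiagProd f (l₁ ++ l₂) =
      offDiagProd f l₁ * offDiagProd f l₂ * (l₁.map fun a => (l₂.map fun b => f b a).prod).prod := by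
  induction l₁ with
  | nil => simp
  | cons a l₁ ih =>
    simp only [cons_append, offDiagProd_cons, ih, map_append, prod_append, map_cons, prod_cons]
    ac_rfl

lemma offDiagProd_perm (hf : ∀ x y, f x y = f y x) {l₁ l₂ : List α} (h : l₁.Perm l₂) :
    offDiagProd f l₁ = offDiagProd f l₂ := by
  induction h with
  | nil => rfl
  | cons a _ ih => rw [offDiagProd_cons, offDiagProd_cons, ih, (‹Perm _ _›.map _).prod_eq]
  | swap x y l =>
    simp only [offDiagProd_cons, map_cons, prod_cons, hf x y]
    ac_rfl
  | trans _ _ ih₁ ih₂ => rw [ih₁, ih₂]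

lemma offDiagProd_map (g : β → α) (l : List β) :
    offDiagProd f (l.map g) = offDiagProd (fun x y => f (g x) (g y)) l := by
  induction l with
  | nil => rfl
  | cons a l ih => simp only [map_cons, offDiagProd_cons, ih, map_map]; rfl

lemma offDiagProd_congr {g : α → α → M} {l : List α} (h : ∀ x ∈ l, ∀ y ∈ l, f x y = g x y) :
    offDiagProd f l = offDiagProd g l :=
  Finset.prod_congr rfl fun _ _ => h _ (getElem_mem _) _ (getElem_mem _)

lemma offDiagProd_mul (g : α → α → M) (l : List α) :
    offDiagProd (fun x y => f x y * g x y) l = offDiagProd f l * offDiagProd g l :=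
  Finset.prod_mul_distrib

lemma map_offDiagProd {N F : Type*} [CommMonoid N] [FunLike F M N] [MonoidHomClass F M N]
    (φ : F) (l : List α) : φ (offDiagProd f l) = offDiagProd (fun x y => φ (f x y)) l :=
  map_prod φ _ _

lemma offDiagProd_apply_mul_apply (g : α → M) (l : List α) :
    offDiagProd (fun x y => g x * g y) l = (l.map g).prod ^ (l.length - 1) := by
  induction l with
  | nil => simp
  | cons a l ih =>
    rw [offDiagProd_cons, ih, prod_map_mul, map_const', prod_replicate]
    cases l with
    | nil => simp
    | cons b l =>
      simp only [length_cons, Nat.add_sub_cancel, map_cons, prod_cons, mul_pow, pow_succ]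
      ac_rfl

end List

section Field

variable {K : Type*} [Field K]

lemma prod_X_sub_C_eq_multiset (L : List K) :
    (L.map fun a => X - C a).prod = ((L : Multiset K).map fun a => X - C a).prod := rfl

lemma roots_C_mul_prod_X_sub_C {c : K} (hc : c ≠ 0) (L : List K) :
    (C c * (L.map fun a => X - C a).prod).roots = L := by
  rw [roots_C_mul _ hc, prod_X_sub_C_eq_multiset, roots_multiset_prod_X_sub_C]

lemma leadingCoeff_C_mul_prod_X_sub_C (c : K) (L : List K) :
    (C c * (L.map fun a => X - C a).prod).leadingCoeff = c := by
  rw [leadingCoeff_mul, leadingCoeff_C, prod_X_sub_C_eq_multiset,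
    (monic_multiset_prod_of_monic _ _ fun a _ => monic_X_sub_C a).leadingCoeff, mul_one]

lemma natDegree_C_mul_prod_X_sub_C {c : K} (hc : c ≠ 0) (L : List K) :
    (C c * (L.map fun a => X - C a).prod).natDegree = L.length := by
  rw [natDegree_C_mul hc, prod_X_sub_C_eq_multiset, natDegree_multiset_prod_X_sub_C_eq_card,
    Multiset.coe_card]

lemma reverse_X_sub_C {a : K} (ha : a ≠ 0) : (X - C a).reverse = C (-a) * (X - C a⁻¹) := by
  have hX : (X : K[X]).reverse = 1 := by
    rw [← mul_one X, reverse_X_mul, ← C_1, reverse_C]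
  rw [sub_eq_add_neg, ← C_neg, reverse_add_C, hX, natDegree_X, pow_one, mul_sub, ← C_mul,
    neg_mul, mul_inv_cancel₀ ha, C_neg, C_neg, C_1]
  ring

lemma reverse_prod_X_sub_C {L : List K} (hL : ∀ a ∈ L, a ≠ 0) :
    (L.map fun a => X - C a).prod.reverse =
      C (L.map Neg.neg).prod * ((L.map (·⁻¹)).map fun a => X - C a).prod := by
  induction L with
  | nil => simpa using reverse_C (1 : K)
  | cons a L ih =>
    rw [List.forall_mem_cons] at hL
    simp only [List.map_cons, List.prod_cons, reverse_mul_of_domain, reverse_X_sub_C hL.1,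
      ih hL.2, C_mul]
    ring

lemma exists_eq_C_mul_prod_X_sub_C [IsAlgClosed K] {P : K[X]} (hP : P ≠ 0) :
    ∃ c : K, ∃ L : List K, c ≠ 0 ∧ P = C c * (L.map fun a => X - C a).prod := by
  refine ⟨P.leadingCoeff, P.roots.toList, leadingCoeff_ne_zero.mpr hP, ?_⟩
  rw [prod_X_sub_C_eq_multiset, Multiset.coe_toList,
    C_leadingCoeff_mul_prod_multiset_X_sub_C IsAlgClosed.card_roots_eq_natDegree]

lemma offDiagProd_sq_sub_map_inv {L : List K} (hL : ∀ a ∈ L, a ≠ 0) :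
    L.prod ^ (2 * L.length - 2) * (L.map (·⁻¹)).offDiagProd (fun a b => (a - b) ^ 2) =
      L.offDiagProd (fun a b => (a - b) ^ 2) := by
  have hsq : L.offDiagProd (fun a b => (a⁻¹ - b⁻¹) ^ 2) =
      L.offDiagProd (fun a b => (a - b) ^ 2 * ((a⁻¹ ^ 2) * (b⁻¹ ^ 2))) := by
    refine List.offDiagProd_congr _ fun a ha b hb => ?_
    have := hL a ha
    have := hL b hb
    field_simp
    ring
  have hprod : (L.map fun a => a⁻¹ ^ 2).prod = (L.prod⁻¹) ^ 2 := by
    rw [List.prod_map_pow, List.prod_inv]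
  have hL0 : L.prod ≠ 0 := List.prod_ne_zero fun h => hL 0 h rfl
  rw [List.offDiagProd_map, hsq, List.offDiagProd_mul, List.offDiagProd_apply_mul_apply, hprod,
    ← pow_mul, show 2 * L.length - 2 = 2 * (L.length - 1) by omega, mul_left_comm, ← mul_pow,
    mul_inv_cancel₀ hL0, one_pow, mul_one]

lemma natDegree_reverse_of_coeff_zero_ne_zero {P : K[X]} (h0 : P.coeff 0 ≠ 0) :
    P.reverse.natDegree = P.natDegree := by
  rw [reverse_natDegree, natTrailingDegree_eq_zero.mpr (Or.inr h0), Nat.sub_zero]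

end Field

lemma disc_eq_offDiagProd (P : ℂ[X]) :
    disc P = P.leadingCoeff ^ (2 * P.natDegree - 2) *
      P.roots.toList.offDiagProd (fun a b => (a - b) ^ 2) := rfl

lemma disc_C_mul_prod_X_sub_C {c : ℂ} (hc : c ≠ 0) (L : List ℂ) :
    disc (C c * (L.map fun a => X - C a).prod) =
      c ^ (2 * L.length - 2) * L.offDiagProd (fun a b => (a - b) ^ 2) := by
  have hroots : (C c * (L.map fun a => X - C a).prod).roots.toList.Perm L := by
    rw [← Multiset.coe_eq_coe, Multiset.coe_toList, roots_C_mul_prod_X_sub_C hc]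
  rw [disc_eq_offDiagProd, leadingCoeff_C_mul_prod_X_sub_C, natDegree_C_mul_prod_X_sub_C hc,
    List.offDiagProd_perm _ (fun a b => by ring) hroots]

lemma res_C_mul_prod_X_sub_C {c d : ℂ} (hc : c ≠ 0) (hd : d ≠ 0) (L M : List ℂ) :
    res (C c * (L.map fun a => X - C a).prod) (C d * (M.map fun b => X - C b).prod) =
      c ^ M.length * d ^ L.length * (L.map fun a => (M.map fun b => b - a).prod).prod := by
  rw [res, leadingCoeff_C_mul_prod_X_sub_C, leadingCoeff_C_mul_prod_X_sub_C,
    natDegree_C_mul_prod_X_sub_C hc, natDegree_C_mul_prod_X_sub_C hd,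
    roots_C_mul_prod_X_sub_C hc, roots_C_mul_prod_X_sub_C hd, Multiset.prod_bind]
  rfl

-- Positive degrees are needed: `2 * 0 - 2` truncates to `0` in the exponent of `disc`.
theorem disc_mul {P Q : ℂ[X]} (hP : 0 < P.natDegree) (hQ : 0 < Q.natDegree) :
    disc (P * Q) = disc P * disc Q * res P Q ^ 2 := by
  obtain ⟨c, L, hc, rfl⟩ := exists_eq_C_mul_prod_X_sub_C (ne_zero_of_natDegree_gt hP)
  obtain ⟨d, M, hd, rfl⟩ := exists_eq_C_mul_prod_X_sub_C (ne_zero_of_natDegree_gt hQ)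
  rw [natDegree_C_mul_prod_X_sub_C hc] at hP
  rw [natDegree_C_mul_prod_X_sub_C hd] at hQ
  have hPQ : C c * (L.map fun a => X - C a).prod * (C d * (M.map fun b => X - C b).prod) =
      C (c * d) * ((L ++ M).map fun a => X - C a).prod := by
    rw [List.map_append, List.prod_append, C_mul]
    ring
  have hcross : (L.map fun a => (M.map fun b => (b - a) ^ 2).prod).prod =
      (L.map fun a => (M.map fun b => b - a).prod).prod ^ 2 := by
    simp only [List.prod_map_pow]
  rw [hPQ, disc_C_mul_prod_X_sub_C (mul_ne_zero hc hd), disc_C_mul_prod_X_sub_C hc,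
    disc_C_mul_prod_X_sub_C hd, res_C_mul_prod_X_sub_C hc hd, List.offDiagProd_append, hcross,
    List.length_append]
  obtain ⟨l, hl⟩ := Nat.exists_eq_add_of_lt hP
  obtain ⟨m, hm⟩ := Nat.exists_eq_add_of_lt hQ
  rw [hl, hm, show 2 * (0 + l + 1 + (0 + m + 1)) - 2 = 2 * l + 2 * m + 2 by omega,
    show 2 * (0 + l + 1) - 2 = 2 * l by omega, show 2 * (0 + m + 1) - 2 = 2 * m by omega]
  ring

theorem disc_map (φ : ℂ →+* ℂ) (P : ℂ[X]) : disc (P.map φ) = φ (disc P) := by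
  rcases eq_or_ne P 0 with rfl | hP
  · simp [disc_eq_offDiagProd]
  obtain ⟨c, L, hc, rfl⟩ := exists_eq_C_mul_prod_X_sub_C hP
  have hmap : (C c * (L.map fun a => X - C a).prod).map φ =
      C (φ c) * ((L.map φ).map fun a => X - C a).prod := by
    simp [Polynomial.map_list_prod, Function.comp_def]
  rw [hmap, disc_C_mul_prod_X_sub_C ((map_ne_zero φ).mpr hc), disc_C_mul_prod_X_sub_C hc,
    List.offDiagProd_map, map_mul, map_pow, List.map_offDiagProd, List.length_map]
  simp only [map_pow, map_sub]

theorem disc_reverse {P : ℂ[X]} (h0 : P.coeff 0 ≠ 0) : disc P.reverse = disc P := by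
  obtain ⟨c, L, hc, rfl⟩ := exists_eq_C_mul_prod_X_sub_C (P := P) (fun h => h0 (by simp [h]))
  have hL : ∀ a ∈ L, a ≠ 0 := by
    rintro a ha rfl
    refine h0 ((coeff_zero_eq_eval_zero _).trans (isRoot_of_mem_roots ?_))
    rwa [roots_C_mul_prod_X_sub_C hc]
  have hneg : (L.map Neg.neg).prod ≠ 0 := by
    rw [List.prod_map_neg]
    exact mul_ne_zero (by simp) (List.prod_ne_zero fun h => hL 0 h rfl)
  have hsign : (L.map Neg.neg).prod ^ (2 * L.length - 2) = L.prod ^ (2 * L.length - 2) := by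
    rw [List.prod_map_neg, mul_pow, ← pow_mul, show 2 * L.length - 2 = 2 * (L.length - 1) by omega,
      ((even_two_mul _).mul_left _).neg_one_pow, one_mul]
  rw [reverse_mul_of_domain, reverse_C, reverse_prod_X_sub_C hL, ← mul_assoc, ← C_mul,
    disc_C_mul_prod_X_sub_C (mul_ne_zero hc hneg), disc_C_mul_prod_X_sub_C hc,
    ← offDiagProd_sq_sub_map_inv hL, List.length_map, mul_pow, hsign]
  ring

lemma recip_eq_reverse_map {n : ℕ} {P : ℂ[X]} (hdeg : P.natDegree = n) :
    recip n P = (P.map (starRingEnd ℂ)).reverse := by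
  rw [recip, reverse, natDegree_map, hdeg]

/-- If `Y = Φ(X)`, i.e. `X·X* = Y* + z^n Y`, then the second discriminant
`Dis₂(Y) = Dis(Y* + z^n Y)` satisfies `Dis₂(Y) = |Dis(X)|²·V(X)²` where
`V(X) = Res(X, X*)`. -/
theorem disc2_eq (n : ℕ) (hn : 1 ≤ n) (Xp Y : Polynomial ℂ)
    (hdeg : Xp.natDegree = n) (h0 : Xp.coeff 0 ≠ 0)
    (hY : recip n Y + X ^ n * Y = Xp * recip n Xp) :
    disc (recip n Y + X ^ n * Y) =
      (Complex.normSq (disc Xp) : ℂ) * res Xp (recip n Xp) ^ 2 := by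
  have h0' : (Xp.map (starRingEnd ℂ)).coeff 0 ≠ 0 := by rwa [coeff_map, _root_.map_ne_zero]
  have hdeg' : (recip n Xp).natDegree = n := by
    rw [recip_eq_reverse_map hdeg, natDegree_reverse_of_coeff_zero_ne_zero h0', natDegree_map, hdeg]
  rw [hY, disc_mul (by omega) (by omega), recip_eq_reverse_map hdeg, disc_reverse h0', disc_map,
    ← Complex.mul_conj]
end

section
/- Let X be a polynomial of degree n with Dis(X) = 0, x_0 = X(0) > 0 real, and all roots nonzero. Then there exists a polynomial Q of degree n with Q(0) > 0 real, V(Q) = Res(Q, Q*) = 0, and Q(z)Q*(z) = X(z)X*(z). -/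
open Polynomial

/-! A double root `z` of `P` lets us write `P = (X - z) R` with `R(z) = 0`. Replacing the factor
`X - z` by `|z| (X - 1/z̄)` does not change `P P*`, because both linear factors have the same
product with their reciprocals; it divides `P(0)` by `|z|`. The new polynomial `Q` still vanishes
at `z` (through `R`) and, having the root `1/z̄`, its reciprocal vanishes at `z` as well, so
`Res(Q, Q*) = 0`. -/

open ComplexConjugate

lemma recip_mul {m k : ℕ} {A B : ℂ[X]} (hA : A.natDegree ≤ m) (hB : B.natDegree ≤ k) :
    recip (m + k) (A * B) = recip m A * recip k B := by
  unfold recip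
  rw [Polynomial.map_mul]
  exact reflect_mul _ _ (natDegree_map_le.trans hA) (natDegree_map_le.trans hB)

lemma recip_eq_zero_iff {n : ℕ} {A : ℂ[X]} : recip n A = 0 ↔ A = 0 := by
  rw [recip, reflect_eq_zero_iff, Polynomial.map_eq_zero_iff (starRingEnd ℂ).injective]

lemma recip_C_mul_X_add_C (a b : ℂ) : recip 1 (C a * X + C b) = C (conj b) * X + C (conj a) := by
  simp [recip, reflect_add, reflect_C_mul, reflect_C, add_comm]

lemma IsRoot.recip_inv_conj {n : ℕ} {A : ℂ[X]} {w : ℂ} (hA : A.natDegree ≤ n) (hw : w ≠ 0)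
    (h : A.IsRoot w) : (recip n A).IsRoot (conj w)⁻¹ := by
  have := invertibleOfNonzero ((map_ne_zero (starRingEnd ℂ)).mpr hw)
  have h' := (eval₂_reflect_eq_zero_iff (RingHom.id ℂ) (conj w) n (A.map (starRingEnd ℂ))
    (natDegree_map_le.trans hA)).mpr (by rw [← eval, eval_map_apply, h.eq_zero, map_zero])
  rwa [invOf_eq_inv] at h'

lemma res_eq_zero_of_isRoot {A B : ℂ[X]} {z : ℂ} (hA : A ≠ 0) (hB : B ≠ 0)
    (hzA : A.IsRoot z) (hzB : B.IsRoot z) : res A B = 0 := by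
  refine mul_eq_zero_of_right _ (Multiset.prod_eq_zero ?_)
  exact Multiset.mem_bind.mpr ⟨z, (mem_roots hA).mpr hzA,
    Multiset.mem_map.mpr ⟨z, (mem_roots hB).mpr hzB, sub_self z⟩⟩

lemma exists_eq_X_sub_C_mul_isRoot_of_two_le_count_roots {K : Type*} [CommRing K] [IsDomain K] [DecidableEq K]
    {P : K[X]} {z : K} (hP : P ≠ 0) (hz : 2 ≤ P.roots.count z) :
    ∃ R, P = (X - C z) * R ∧ R.IsRoot z := by
  obtain ⟨S, hS⟩ : (X - C z) ^ 2 ∣ P := by rwa [← le_rootMultiplicity_iff hP, ← count_roots]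
  exact ⟨(X - C z) * S, by rw [hS]; ring, by simp⟩

lemma exists_two_le_count_roots_of_disc_eq_zero {P : ℂ[X]} (h : disc P = 0) :
    ∃ z, 2 ≤ P.roots.count z := by
  by_contra! hsimple
  have hnodup : P.roots.toList.Nodup :=
    Multiset.coe_nodup.mp (by
      rw [Multiset.coe_toList, Multiset.nodup_iff_count_le_one]
      exact fun z => Nat.le_of_lt_succ (hsimple z))
  have hP : P ≠ 0 := by
    rintro rfl
    rw [disc, Finset.prod_eq_one fun p _ => Fin.elim0 (p.1.cast (by simp))] at h
    simp at h
  refine mul_ne_zero (pow_ne_zero _ (leadingCoeff_ne_zero.mpr hP))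
    (Finset.prod_ne_zero_iff.mpr fun p hp => ?_) h
  have hne : p.1 ≠ p.2 := (Finset.mem_filter.mp hp).2.ne'
  exact pow_ne_zero _ (sub_ne_zero.mpr fun heq => hne (hnodup.get_inj_iff.mp heq))

noncomputable def inversionFactor (z : ℂ) : ℂ[X] := C (‖z‖ : ℂ) * (X - C (conj z)⁻¹)

section inversionFactor

variable {z : ℂ}

lemma isRoot_inversionFactor : (inversionFactor z).IsRoot (conj z)⁻¹ := by
  simp [inversionFactor]

lemma natDegree_inversionFactor (hz : z ≠ 0) : (inversionFactor z).natDegree = 1 := by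
  rw [inversionFactor, natDegree_C_mul (by simpa using hz), natDegree_X_sub_C]

lemma coeff_zero_inversionFactor (hz : z ≠ 0) :
    (inversionFactor z).coeff 0 = ((‖z‖⁻¹ : ℝ) : ℂ) * (X - C z).coeff 0 := by
  have hr : (‖z‖ : ℂ) ≠ 0 := by simpa using hz
  have hcz : conj z ≠ 0 := by simpa using hz
  have hzz : z * conj z = (‖z‖ : ℂ) ^ 2 := Complex.mul_conj' z
  simp only [inversionFactor, mul_coeff_zero, coeff_C_zero, coeff_sub, coeff_X_zero]
  push_cast
  field_simp
  linear_combination hzz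

lemma inversionFactor_mul_recip (hz : z ≠ 0) :
    inversionFactor z * recip 1 (inversionFactor z) = (X - C z) * recip 1 (X - C z) := by
  have hcz : conj z ≠ 0 := by simpa using hz
  have hzz : z * conj z = (‖z‖ : ℂ) ^ 2 := Complex.mul_conj' z
  have hF : inversionFactor z = C (‖z‖ : ℂ) * X + C (-(‖z‖ * (conj z)⁻¹)) := by
    rw [inversionFactor, C_neg, C_mul]; ring
  have hL : X - C z = C 1 * X + C (-z) := by rw [C_1, C_neg]; ring
  rw [hF, hL, recip_C_mul_X_add_C, recip_C_mul_X_add_C]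
  refine Polynomial.funext fun x => ?_
  simp only [eval_mul, eval_add, eval_neg, eval_one, eval_C, eval_X, map_neg, map_mul, map_inv₀,
    map_one, Complex.conj_ofReal, Complex.conj_conj]
  field_simp
  linear_combination -(x * conj z - 1) * (z - x) * hzz

lemma inversionFactor_mul_mul_recip (hz : z ≠ 0) (R : ℂ[X]) :
    inversionFactor z * R * recip (1 + R.natDegree) (inversionFactor z * R) =
      (X - C z) * R * recip (1 + R.natDegree) ((X - C z) * R) := by
  rw [recip_mul (natDegree_inversionFactor hz).le le_rfl,
    recip_mul (natDegree_X_sub_C z).le le_rfl]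
  calc _ = inversionFactor z * recip 1 (inversionFactor z) * (R * recip R.natDegree R) := by ring
    _ = _ := by rw [inversionFactor_mul_recip hz]; ring

end inversionFactor

/-- If `X` has degree `n`, `Dis(X) = 0`, `X(0)` is a positive real, and all roots of
`X` are nonzero, then there is a degree-`n` polynomial `Q` with `Q(0)` a positive real,
`V(Q) = Res(Q, Q*) = 0`, and `Q·Q* = X·X*`. -/
theorem discriminant_zero_shadow (n : ℕ) (P : Polynomial ℂ)
    (hdeg : P.natDegree = n) (hdisc : disc P = 0)
    (h0im : (P.coeff 0).im = 0) (h0pos : 0 < (P.coeff 0).re)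
    (hroots : ∀ z ∈ P.roots, z ≠ 0) :
    ∃ Q : Polynomial ℂ, Q.natDegree = n ∧ (Q.coeff 0).im = 0 ∧ 0 < (Q.coeff 0).re ∧
      res Q (recip n Q) = 0 ∧ Q * recip n Q = P * recip n P := by
  have hP : P ≠ 0 := by rintro rfl; simp at h0pos
  obtain ⟨z, hz2⟩ := exists_two_le_count_roots_of_disc_eq_zero hdisc
  have hz : z ≠ 0 := hroots z (Multiset.count_pos.mp (by omega))
  obtain ⟨R, hPR, hzR⟩ := exists_eq_X_sub_C_mul_isRoot_of_two_le_count_roots hP hz2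
  have hR : R ≠ 0 := right_ne_zero_of_mul (hPR ▸ hP)
  have hn : n = 1 + R.natDegree := by
    rw [← hdeg, hPR, natDegree_mul (X_sub_C_ne_zero z) hR, natDegree_X_sub_C]
  obtain ⟨Q, hQR⟩ : ∃ Q, Q = inversionFactor z * R := ⟨_, rfl⟩
  have hQ : Q * recip n Q = P * recip n P := by
    rw [hn, hQR, hPR, inversionFactor_mul_mul_recip hz]
  have hQ0 : Q.coeff 0 = ((‖z‖⁻¹ : ℝ) : ℂ) * P.coeff 0 := by
    rw [hQR, hPR, mul_coeff_zero, mul_coeff_zero, coeff_zero_inversionFactor hz, mul_assoc]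
  have hQne : Q ≠ 0 := left_ne_zero_of_mul (hQ ▸ mul_ne_zero hP (recip_eq_zero_iff.not.mpr hP))
  have hQdeg : Q.natDegree = n := by
    rw [hn, hQR, natDegree_mul (left_ne_zero_of_mul (hQR ▸ hQne)) hR, natDegree_inversionFactor hz]
  refine ⟨Q, hQdeg, ?_, ?_, ?_, hQ⟩
  · simp [hQ0, h0im]
  · rw [hQ0, Complex.re_ofReal_mul]; positivity
  · have hzQ : Q.IsRoot z := by simp [hQR, hzR.eq_zero]
    have hwQ : Q.IsRoot (conj z)⁻¹ := by simp [hQR, isRoot_inversionFactor.eq_zero]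
    have hzQ' : (recip n Q).IsRoot z := by
      simpa using IsRoot.recip_inv_conj hQdeg.le (by simpa using hz) hwQ
    exact res_eq_zero_of_isRoot hQne (recip_eq_zero_iff.not.mpr hQne) hzQ hzQ'
end

section
/- The polynomial ∏_{1 ≤ j < i ≤ m} (z_i - z_j)^2 (the discriminant of the variables z_1, ..., z_m) admits no nontrivial factorization into a product of two symmetric polynomials in ℂ[z_1, ..., z_m]: if ∏_{i>j}(z_i - z_j)^2 = A·B with A, B symmetric polynomials, then A or B is a constant. -/
/-!
The factors `X i - X j` (`j < i`) of the Vandermonde product `Δ` are pairwise non-associated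
primes, and a permutation of the variables carries any one of them to `±` any other. Hence a
symmetric non-unit divisor of `Δ²` is divisible by every factor, hence by `Δ`. If neither `A`
nor `B` were a unit, then `A = Δ * c` for a nonzero constant `c`; but a transposition of the
variables changes the sign of `Δ`, so `A` would not be symmetric.
-/

open Finset MvPolynomial

theorem Equiv.Perm.exists_apply_eq_and_apply_eq {α : Type*} [DecidableEq α] {a b c d : α}
    (hab : a ≠ b) (hcd : c ≠ d) : ∃ τ : Equiv.Perm α, τ a = c ∧ τ b = d := by
  set τ₁ := Equiv.swap a c
  have hτ₁a : τ₁ a = c := Equiv.swap_apply_left a c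
  have hτ₁b : τ₁ b ≠ c := fun h => hab (τ₁.injective (h.trans hτ₁a.symm)).symm
  refine ⟨τ₁.trans (Equiv.swap (τ₁ b) d), ?_, Equiv.swap_apply_left _ _⟩
  rw [Equiv.trans_apply, hτ₁a]
  exact Equiv.swap_apply_of_ne_of_ne hτ₁b.symm hcd

theorem Finset.prod_dvd_of_prime_of_pairwise_not_dvd {M₀ ι : Type*} [CommMonoidWithZero M₀]
    [IsCancelMulZero M₀] {s : Finset ι} {f : ι → M₀} {a : M₀}
    (hprime : ∀ i ∈ s, Prime (f i)) (hndvd : (s : Set ι).Pairwise fun i j => ¬ f i ∣ f j)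
    (hdvd : ∀ i ∈ s, f i ∣ a) :
    ∏ i ∈ s, f i ∣ a := by
  classical
  rw [prod_eq_multiset_prod]
  refine Multiset.prod_primes_dvd a (by simpa using hprime) (by simpa using hdvd) fun b => ?_
  rw [Multiset.countP_map, ← Finset.filter_val, Finset.card_val, Finset.card_le_one]
  intro i hi j hj
  simp only [mem_filter] at hi hj
  by_contra hij
  exact hndvd hi.1 hj.1 hij (hi.2.symm.trans hj.2).dvd

namespace MvPolynomial

variable {R σ : Type*} [CommRing R]

theorem prime_X_sub_X [IsDomain R] {i j : σ} (hij : i ≠ j) :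
    Prime (X i - X j : MvPolynomial σ R) := by
  classical
  let shear : MvPolynomial σ R ≃ₐ[R] MvPolynomial σ R :=
    AlgEquiv.ofAlgHom (aeval (Function.update X i (X i - X j)))
      (aeval (Function.update X i (X i + X j)))
      (by ext k; by_cases hk : k = i <;> simp [hk, hij.symm])
      (by ext k; by_cases hk : k = i <;> simp [hk, hij.symm])
  have hshear : shear (X i) = X i - X j := by simp [shear]
  rw [← hshear, MulEquiv.prime_iff]
  exact X_prime

theorem X_sub_X_not_dvd_X_sub_X [Nontrivial R] {i j k l : σ} (hki : k ≠ i) (hkj : k ≠ j)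
    (hkl : k ≠ l) : ¬ (X i - X j : MvPolynomial σ R) ∣ X k - X l := by
  classical
  intro hdvd
  have := map_dvd (eval (Pi.single k 1)) hdvd
  simp [hki.symm, hkj.symm, hkl.symm] at this

theorem IsSymmetric.X_sub_X_dvd {P : MvPolynomial σ R} (hP : P.IsSymmetric) {i j k l : σ}
    (hij : i ≠ j) (hkl : k ≠ l) (hdvd : X i - X j ∣ P) : X k - X l ∣ P := by
  classical
  obtain ⟨τ, rfl, rfl⟩ := Equiv.Perm.exists_apply_eq_and_apply_eq hij hkl
  simpa [hP τ] using map_dvd (rename τ) hdvd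


variable (R) in
noncomputable def vandermonde (n : ℕ) : MvPolynomial (Fin n) R :=
  ∏ p ∈ univ.filter (fun p : Fin n × Fin n => p.2 < p.1), (X p.1 - X p.2)

theorem vandermonde_eq_one {n : ℕ} (hn : n ≤ 1) : vandermonde R n = 1 := by
  refine prod_eq_one fun p hp => ?_
  have := (mem_filter.mp hp).2
  omega

theorem det_vandermonde_X (n : ℕ) :
    (Matrix.vandermonde (X : Fin n → MvPolynomial (Fin n) R)).det = vandermonde R n := by
  rw [Matrix.det_vandermonde, vandermonde,
    prod_finset_product_right' _ univ (fun i => Ioi i) (by simp) (f := fun a c => X a - X c)]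

theorem rename_vandermonde (n : ℕ) (τ : Equiv.Perm (Fin n)) :
    rename τ (vandermonde R n) = Equiv.Perm.sign τ * vandermonde R n := by
  rw [← det_vandermonde_X, AlgHom.map_det, ← Matrix.det_permute]
  congr 1
  ext a b
  simp [Matrix.vandermonde_apply]

theorem vandermonde_ne_zero [IsDomain R] (n : ℕ) : vandermonde R n ≠ 0 :=
  prod_ne_zero_iff.mpr fun _ hp => (prime_X_sub_X (mem_filter.mp hp).2.ne').ne_zero

theorem X_sub_X_not_dvd_X_sub_X_of_lt [Nontrivial R] [LinearOrder σ] {i j k l : σ}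
    (hji : j < i) (hlk : l < k) (hne : (i, j) ≠ (k, l)) :
    ¬ (X i - X j : MvPolynomial σ R) ∣ X k - X l := by
  by_cases hk : k ≠ i ∧ k ≠ j
  · exact X_sub_X_not_dvd_X_sub_X hk.1 hk.2 hlk.ne'
  · have hl : l ≠ i ∧ l ≠ j := by grind
    rw [← neg_sub (X l) (X k), dvd_neg]
    exact X_sub_X_not_dvd_X_sub_X hl.1 hl.2 hlk.ne

theorem vandermonde_dvd_of_isSymmetric_of_dvd_pow [IsDomain R] [UniqueFactorizationMonoid R]
    {n k : ℕ} {P : MvPolynomial (Fin n) R} (hP : P.IsSymmetric) (hPu : ¬ IsUnit P)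
    (hdvd : P ∣ vandermonde R n ^ k) : vandermonde R n ∣ P := by
  have hP0 : P ≠ 0 := ne_zero_of_dvd_ne_zero (pow_ne_zero k (vandermonde_ne_zero n)) hdvd
  obtain ⟨r, hr, hrP⟩ := WfDvdMonoid.exists_irreducible_factor hPu hP0
  replace hr : Prime r := UniqueFactorizationMonoid.irreducible_iff_prime.mp hr
  obtain ⟨p, hp, hrp⟩ := (hr.dvd_finsetProd_iff _).mp (hr.dvd_of_dvd_pow (hrP.trans hdvd))
  simp only [mem_filter, mem_univ, true_and] at hp
  have hpP : X p.1 - X p.2 ∣ P :=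
    (hr.associated_of_dvd (prime_X_sub_X hp.ne') hrp).symm.dvd.trans hrP
  refine prod_dvd_of_prime_of_pairwise_not_dvd ?_ ?_ ?_ <;>
    simp only [coe_filter, mem_filter, mem_univ, true_and]
  · exact fun q hq => prime_X_sub_X hq.ne'
  · exact fun q hq q' hq' hne => X_sub_X_not_dvd_X_sub_X_of_lt hq hq' hne
  · exact fun q hq => hP.X_sub_X_dvd hp.ne' hq.ne' hpP

theorem eq_zero_of_isSymmetric_vandermonde_mul [IsDomain R] [CharZero R] {n : ℕ} (hn : 1 < n)
    {Q : MvPolynomial (Fin n) R} (hQ : Q.IsSymmetric)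
    (hΔQ : (vandermonde R n * Q).IsSymmetric) : Q = 0 := by
  have hswap := hΔQ (Equiv.swap ⟨0, by omega⟩ ⟨1, hn⟩)
  rw [map_mul, rename_vandermonde, hQ, Equiv.Perm.sign_swap (by simp)] at hswap
  simpa [CharZero.neg_eq_self_iff, vandermonde_ne_zero] using hswap

end MvPolynomial

/-- The squared Vandermonde `∏_{j<i}(z_i - z_j)²` admits no nontrivial factorization
into two symmetric polynomials: if it equals `A·B` with `A`, `B` symmetric, then `A`
or `B` is a constant. -/
theorem vandermonde_sq_no_symmetric_factorization (m : ℕ)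
    (A B : MvPolynomial (Fin m) ℂ)
    (hA : A.IsSymmetric) (hB : B.IsSymmetric)
    (h : A * B = ∏ p ∈ Finset.univ.filter (fun p : Fin m × Fin m => p.2 < p.1),
      (MvPolynomial.X p.1 - MvPolynomial.X p.2) ^ 2) :
    (∃ c : ℂ, A = MvPolynomial.C c) ∨ ∃ c : ℂ, B = MvPolynomial.C c := by
  have hAB : A * B = vandermonde ℂ m ^ 2 := by rw [h, vandermonde, prod_pow]
  have eq_C_of_isUnit (P : MvPolynomial (Fin m) ℂ) (hP : IsUnit P) : ∃ c, P = C c :=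
    let ⟨c, _, hc⟩ := isUnit_iff_eq_C_of_isReduced.mp hP; ⟨c, hc⟩
  rcases le_or_gt m 1 with hm | hm
  · rw [vandermonde_eq_one hm, one_pow] at hAB
    exact .inl (eq_C_of_isUnit A (IsUnit.of_mul_eq_one B hAB))
  by_cases hAu : IsUnit A
  · exact .inl (eq_C_of_isUnit A hAu)
  by_cases hBu : IsUnit B
  · exact .inr (eq_C_of_isUnit B hBu)
  obtain ⟨A₁, rfl⟩ := vandermonde_dvd_of_isSymmetric_of_dvd_pow hA hAu (Dvd.intro B hAB)
  obtain ⟨B₁, rfl⟩ := vandermonde_dvd_of_isSymmetric_of_dvd_pow hB hBu (Dvd.intro_left _ hAB)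
  have hA₁B₁ : A₁ * B₁ = 1 := mul_left_cancel₀ (pow_ne_zero 2 (vandermonde_ne_zero m))
    (by linear_combination hAB)
  obtain ⟨c, rfl⟩ := eq_C_of_isUnit A₁ (IsUnit.of_mul_eq_one B₁ hA₁B₁)
  rw [eq_zero_of_isSymmetric_vandermonde_mul hm (IsSymmetric.C c) hA, zero_mul] at hA₁B₁
  exact absurd hA₁B₁ zero_ne_one
end
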